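/- arXiv:1912.10368 — 3 statements merged into one kernel-verified Lean document; each statement's English description precedes it below -/
import Mathlib

section
/- Let d ≥ 2. For every κ > 0 there exists a constant C = C(d,κ) such that for all ε ∈ (0,1], all k₀ ∈ ℤ^d with |k₀| ≤ ε^{-1}, all α ∈ ℝ, all β ≥ 1, and all σ, σ' ∈ {−1,+1} with (σ,σ') ≠ (1,1): ∑_{k,k' ∈ ℤ^d, |k| < ε^{-1}, |k'| < ε^{-1}} 1/| |k|² + σ'|k'|² + σ|k₀ − k − k'|² − α + iβ | ≤ C ε^{2 − 2d − κ}, where |z| denotes the modulus of the complex number z. -/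
open scoped BigOperators Classical

noncomputable section

namespace KWE

/-- squared Euclidean norm of a lattice point -/
def nsq {d : ℕ} (k : Fin d → ℤ) : ℝ := ∑ i, ((k i : ℝ))^2

/-- Euclidean norm of a lattice point -/
def znorm {d : ℕ} (k : Fin d → ℤ) : ℝ := Real.sqrt (nsq k)

/-!
Every summand is at most `decay X = 1 / max 1 |X|`, where
`X = |k|² + σ' |k'|² + σ |k₀ - k - k'|² - α`. Unless `σ = σ' = 1`, expanding `|k₀ - k - k'|²`
turns `X`, up to sign, into `2 ⟪k₀ - v, w⟫ + c v` with `(v, w) = (k, k')` or `(k', k)`: the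
phase is linear in `w`. Put `u = k₀ - v`, which lies in the box of radius `T = 2 ⌊ε⁻¹⌋`, and fix
all coordinates of `w` but the first two, `x` and `y`. If `u 0 ≠ 0`, every value
`m = u 0 * x + u 1 * y` is attained at most `(2T + 1) gcd (u 0) (u 1) / |u 0| + 1` times, while
`∑ₘ decay (2m + c) ≤ 2 harmonic (4T² + 1)` whatever `c` is; and summing `gcd a b / |a|` over
`|a|, |b| ≤ T` costs only `T log² T`. The vectors with `u 0 = 0` pose the same problem in one
dimension less. Altogether the sum is `O(T^(2d-2) log³ T)`.
-/

open Finset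

def decay (x : ℝ) : ℝ := (max 1 |x|)⁻¹

lemma decay_nonneg (x : ℝ) : 0 ≤ decay x := by unfold decay; positivity

lemma decay_le_one (x : ℝ) : decay x ≤ 1 := inv_le_one_of_one_le₀ (le_max_left _ _)

lemma decay_neg (x : ℝ) : decay (-x) = decay x := by rw [decay, decay, abs_neg]

lemma decay_le_of_le_abs {x : ℝ} {n : ℕ} (h : (n : ℝ) ≤ |x|) : decay x ≤ 2 / (n + 1) := by
  rw [decay, inv_eq_one_div, div_le_div_iff₀ (by positivity) (by positivity)]
  linarith [le_max_left 1 |x|, le_max_right 1 |x|]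

lemma inv_norm_add_I_mul_le_decay (X : ℝ) {β : ℝ} (hβ : 1 ≤ β) :
    ‖(X : ℂ) + Complex.I * β‖⁻¹ ≤ decay X := by
  have hre : |X| ≤ ‖(X : ℂ) + Complex.I * β‖ := by
    simpa using Complex.abs_re_le_norm ((X : ℂ) + Complex.I * β)
  have him : β ≤ ‖(X : ℂ) + Complex.I * β‖ := by
    simpa [abs_of_pos (by linarith : (0:ℝ) < β)] using
      Complex.abs_im_le_norm ((X : ℂ) + Complex.I * β)
  exact inv_anti₀ (by positivity) (max_le (hβ.trans him) hre)

lemma harmonic_nonneg (n : ℕ) : 0 ≤ harmonic n := sum_nonneg fun _ _ => by positivity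

/-- Removing whichever endpoint of the progression lies farther from `0` costs at most
`2 / (n + 1)`, which is how `2 * harmonic` appears. -/
lemma sum_range_decay_le (n : ℕ) (c : ℝ) :
    ∑ k ∈ range n, decay (2 * k + c) ≤ 2 * harmonic n := by
  induction n generalizing c with
  | zero => simp
  | succ n ih =>
    have hspread : 2 * (n : ℝ) ≤ |2 * n + c| + |c| := by
      simpa using abs_sub_le (2 * (n : ℝ) + c) 0 c
    push_cast [harmonic_succ]
    rw [mul_add, ← div_eq_mul_inv]
    rcases le_total |2 * (n : ℝ) + c| |c| with h | h
    · rw [sum_range_succ']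
      have := ih (c + 2)
      push_cast
      simp only [mul_zero, zero_add, show ∀ k : ℝ, 2 * (k + 1) + c = 2 * k + (c + 2) by
        intro k; ring]
      linarith [decay_le_of_le_abs (x := c) (n := n) (by linarith)]
    · rw [sum_range_succ]
      linarith [ih c, decay_le_of_le_abs (x := 2 * n + c) (n := n) (by linarith)]

lemma sum_Icc_decay_le (N : ℕ) (c : ℝ) :
    ∑ m ∈ Icc (-N : ℤ) N, decay (2 * m + c) ≤ 2 * harmonic (2 * N + 1) := by
  have hIcc : Icc (-N : ℤ) N = (range (2 * N + 1)).image (fun k : ℕ => (k : ℤ) - N) := by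
    ext m
    simp only [mem_Icc, mem_image, mem_range]
    exact ⟨fun h => ⟨(m + N).toNat, by omega, by omega⟩, by rintro ⟨k, hk, rfl⟩; omega⟩
  rw [hIcc, sum_image (fun _ _ _ _ h => by simpa using h)]
  convert sum_range_decay_le (2 * N + 1) (c - 2 * N) using 3
  push_cast; ring

lemma sum_decay_le_of_card_fiber_le {α : Type*} (s : Finset α) (f : α → ℤ) {N : ℕ} {K : ℝ}
    (hf : ∀ p ∈ s, |f p| ≤ N) (hK : ∀ m, (#{p ∈ s | f p = m} : ℝ) ≤ K) (c : ℝ) :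
    ∑ p ∈ s, decay (2 * f p + c) ≤ K * (2 * harmonic (2 * N + 1)) := by
  have hK0 : 0 ≤ K := (Nat.cast_nonneg _).trans (hK 0)
  rw [← sum_fiberwise_of_maps_to (t := Icc (-N : ℤ) N) (fun p hp => mem_Icc.2 (abs_le.1 (hf p hp)))]
  calc ∑ m ∈ Icc (-N : ℤ) N, ∑ p ∈ s with f p = m, decay (2 * f p + c)
      = ∑ m ∈ Icc (-N : ℤ) N, (#{p ∈ s | f p = m} : ℝ) * decay (2 * m + c) := by
        refine sum_congr rfl fun m _ => ?_
        rw [sum_congr rfl fun p hp => by rw [(mem_filter.1 hp).2], sum_const, nsmul_eq_mul]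
    _ ≤ ∑ m ∈ Icc (-N : ℤ) N, K * decay (2 * m + c) :=
        sum_le_sum fun m _ => mul_le_mul_of_nonneg_right (hK m) (decay_nonneg _)
    _ ≤ K * (2 * harmonic (2 * N + 1)) := by
        rw [← mul_sum]; exact mul_le_mul_of_nonneg_left (sum_Icc_decay_le N c) hK0

lemma card_Icc_neg_self (T : ℕ) : #(Icc (-T : ℤ) T) = 2 * T + 1 := by
  rw [Int.card_Icc]; omega

lemma card_filter_Icc_modEq_le (T : ℕ) {q : ℕ} (hq : 0 < q) (r : ℤ) :
    (#{y ∈ Icc (-T : ℤ) T | y ≡ r [ZMOD q]} : ℝ) ≤ (2 * T + 1) / q + 1 := by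
  have hIoc : Icc (-T : ℤ) T = Ioc (-T - 1 : ℤ) T := by ext; simp only [mem_Icc, mem_Ioc]; omega
  have hcard := Int.Ioc_filter_modEq_card (-T - 1 : ℤ) T (r := q) (by exact_mod_cast hq) r
  rw [hIoc]
  have key : (#{y ∈ Ioc (-T - 1 : ℤ) T | y ≡ r [ZMOD q]} : ℚ) ≤ (2 * T + 1) / q + 1 := by
    have h1 := Int.floor_le (((T : ℤ) - r : ℤ) / (q : ℚ))
    have h2 := Int.lt_floor_add_one (((-T - 1 : ℤ) - r : ℤ) / (q : ℚ))
    have h3 : ((T : ℤ) - r : ℤ) / (q : ℚ) - ((-T - 1 : ℤ) - r : ℤ) / (q : ℚ) = (2 * T + 1) / q := by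
      push_cast; field_simp; ring
    have h4 : (0 : ℚ) ≤ (2 * T + 1) / q + 1 := by positivity
    rw [← Int.cast_natCast, hcard]
    push_cast
    exact max_le (by push_cast at h1 h2 h3; linarith) h4
  have := (Rat.cast_le (K := ℝ)).2 key
  push_cast at this
  exact this

lemma card_Icc_filter_dvd_le (T : ℕ) {g : ℕ} (hg : 0 < g) :
    (#{b ∈ Icc (-T : ℤ) T | (g : ℤ) ∣ b} : ℝ) ≤ (2 * T + 1) / g + 1 := by
  simpa only [Int.modEq_zero_iff_dvd] using card_filter_Icc_modEq_le T hg 0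

/-- On the line `a x + b y = m` the coordinate `y` determines `x` and is fixed modulo
`a / gcd a b`. -/
lemma card_filter_line_le (T : ℕ) {a : ℤ} (ha : a ≠ 0) (b m : ℤ) :
    (#{p ∈ Icc (-T : ℤ) T ×ˢ Icc (-T : ℤ) T | a * p.1 + b * p.2 = m} : ℝ)
      ≤ (2 * T + 1) * Int.gcd a b / |a| + 1 := by
  rcases eq_empty_or_nonempty {p ∈ Icc (-T : ℤ) T ×ˢ Icc (-T : ℤ) T | a * p.1 + b * p.2 = m}
    with h | ⟨p₀, hp₀⟩
  · rw [h, card_empty, Nat.cast_zero]; positivity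
  have hg : 0 < Int.gcd a b := Int.gcd_pos_of_ne_zero_left b ha
  have hg' : (Int.gcd a b : ℤ) ≠ 0 := by exact_mod_cast hg.ne'
  obtain ⟨a', ha'⟩ := Int.gcd_dvd_left a b
  obtain ⟨b', hb'⟩ := Int.gcd_dvd_right a b
  have hcop : Int.gcd a' b' = 1 := by
    have := Int.gcd_div_gcd_div_gcd hg
    nth_rw 2 [hb'] at this
    nth_rw 1 [ha'] at this
    rwa [Int.mul_ediv_cancel_left _ hg', Int.mul_ediv_cancel_left _ hg'] at this
  have hq : 0 < a'.natAbs := Int.natAbs_pos.2 (by rintro rfl; simp [ha] at ha')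
  rw [mem_filter] at hp₀
  calc (#{p ∈ Icc (-T : ℤ) T ×ˢ Icc (-T : ℤ) T | a * p.1 + b * p.2 = m} : ℝ)
      ≤ #{y ∈ Icc (-T : ℤ) T | y ≡ p₀.2 [ZMOD a'.natAbs]} := by
        refine Nat.cast_le.2
          (card_le_card_of_injOn Prod.snd (fun p hp => ?_) fun p hp p' hp' h => ?_)
        · simp only [coe_filter, mem_product, Set.mem_ofPred_eq] at hp ⊢
          refine ⟨hp.1.2, (Int.modEq_iff_dvd.2 (Int.natAbs_dvd.2 ?_)).symm⟩
          refine Int.dvd_of_dvd_mul_right_of_gcd_one (b := b') ⟨p₀.1 - p.1, ?_⟩ hcop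
          apply mul_left_cancel₀ hg'
          linear_combination hp.2.trans hp₀.2.symm - (p.1 - p₀.1) * ha' - (p.2 - p₀.2) * hb'
        · simp only [coe_filter, Set.mem_ofPred_eq] at hp hp'
          refine Prod.ext (mul_left_cancel₀ ha ?_) h
          linear_combination hp.2 - hp'.2 - b * h
    _ ≤ (2 * T + 1) / a'.natAbs + 1 := card_filter_Icc_modEq_le T hq _
    _ = (2 * T + 1) * Int.gcd a b / |a| + 1 := by
        have habs : |a| = Int.gcd a b * a'.natAbs := by
          conv_lhs => rw [ha']
          rw [abs_mul, Int.natCast_natAbs, abs_of_pos (by exact_mod_cast hg)]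
        rw [habs, Int.cast_mul, Int.cast_natCast, Int.cast_natCast]
        field_simp

lemma sum_Icc_inv_abs (T : ℕ) : ∑ h ∈ Icc (-T : ℤ) T, (|h| : ℝ)⁻¹ = 2 * harmonic T := by
  induction T with
  | zero => simp
  | succ T ih =>
    have hIcc : Icc (-(T + 1 : ℕ) : ℤ) (T + 1 : ℕ)
        = insert (-(T + 1 : ℤ)) (insert (T + 1 : ℤ) (Icc (-T : ℤ) T)) := by
      ext; simp only [mem_Icc, mem_insert]; omega
    rw [hIcc, sum_insert (by simp; omega), sum_insert (by simp), ih, harmonic_succ]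
    push_cast
    rw [abs_neg, abs_of_pos (by positivity)]
    ring

lemma sum_Icc_filter_dvd_inv_abs_le (T : ℕ) {g : ℕ} (hg : 0 < g) :
    ∑ a ∈ Icc (-T : ℤ) T with (g : ℤ) ∣ a, (|a| : ℝ)⁻¹ ≤ 2 * harmonic T / g := by
  have hsub : {a ∈ Icc (-T : ℤ) T | (g : ℤ) ∣ a} ⊆ (Icc (-T : ℤ) T).image ((g : ℤ) * ·) := by
    intro a ha
    obtain ⟨⟨hl, hr⟩, h, rfl⟩ := by simpa only [mem_filter, mem_Icc] using ha
    refine mem_image.2 ⟨h, mem_Icc.2 ⟨?_, ?_⟩, rfl⟩ <;> nlinarith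
  have hinj : Set.InjOn ((g : ℤ) * ·) (Icc (-T : ℤ) T) :=
    fun _ _ _ _ h => mul_left_cancel₀ (by exact_mod_cast hg.ne') h
  calc ∑ a ∈ Icc (-T : ℤ) T with (g : ℤ) ∣ a, (|a| : ℝ)⁻¹
      ≤ ∑ a ∈ (Icc (-T : ℤ) T).image ((g : ℤ) * ·), (|a| : ℝ)⁻¹ :=
        sum_le_sum_of_subset_of_nonneg hsub fun _ _ _ => by positivity
    _ = ∑ h ∈ Icc (-T : ℤ) T, (g : ℝ)⁻¹ * (|h| : ℝ)⁻¹ := by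
        rw [sum_image hinj]
        push_cast
        simp [abs_mul, mul_comm]
    _ = 2 * harmonic T / g := by rw [← mul_sum, sum_Icc_inv_abs]; ring

lemma gcd_le_sum_filter_dvd {T : ℕ} {a : ℤ} (ha : a ≠ 0) (haT : |a| ≤ T) (b : ℤ) :
    (Int.gcd a b : ℝ) ≤ ∑ g ∈ Icc 1 T, if (g : ℤ) ∣ a ∧ (g : ℤ) ∣ b then (g : ℝ) else 0 := by
  have hmem : Int.gcd a b ∈ Icc 1 T := by
    refine mem_Icc.2 ⟨Int.gcd_pos_of_ne_zero_left b ha, ?_⟩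
    have := Nat.gcd_le_left b.natAbs (Int.natAbs_pos.2 ha)
    rw [Int.abs_eq_natAbs] at haT
    exact this.trans (by exact_mod_cast haT)
  refine le_of_eq_of_le ?_ (single_le_sum (fun g _ => ?_) hmem)
  · rw [if_pos ⟨Int.gcd_dvd_left a b, Int.gcd_dvd_right a b⟩]
  · split <;> positivity

lemma gcd_div_abs_le_sum_dvd {T : ℕ} {a : ℤ} (haT : |a| ≤ T) (b : ℤ) :
    (Int.gcd a b : ℝ) / |a| ≤ ∑ g ∈ Icc 1 T,
      (g : ℝ) * ((if (g : ℤ) ∣ a then (|a| : ℝ)⁻¹ else 0) * (if (g : ℤ) ∣ b then 1 else 0)) := by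
  rcases eq_or_ne a 0 with rfl | ha
  · simp
  calc (Int.gcd a b : ℝ) / |a|
      ≤ (∑ g ∈ Icc 1 T, if (g : ℤ) ∣ a ∧ (g : ℤ) ∣ b then (g : ℝ) else 0) / |a| := by
        gcongr
        exact gcd_le_sum_filter_dvd ha haT b
    _ = _ := by
        rw [sum_div]
        refine sum_congr rfl fun g _ => ?_
        split_ifs <;> simp_all [div_eq_mul_inv]

/-- Bounding `gcd a b` by the sum of the common divisors `g ≤ T` makes the sums over `a` and
over `b` independent for each `g`. -/
lemma sum_sum_gcd_div_abs_le (T : ℕ) :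
    ∑ a ∈ Icc (-T : ℤ) T, ∑ b ∈ Icc (-T : ℤ) T, (Int.gcd a b : ℝ) / |a|
      ≤ 2 * harmonic T * ((2 * T + 1) * harmonic T + T) := by
  set I := Icc (-T : ℤ) T
  calc ∑ a ∈ I, ∑ b ∈ I, (Int.gcd a b : ℝ) / |a|
      ≤ ∑ a ∈ I, ∑ b ∈ I, ∑ g ∈ Icc 1 T,
          (g : ℝ) * ((if (g : ℤ) ∣ a then (|a| : ℝ)⁻¹ else 0) * (if (g : ℤ) ∣ b then 1 else 0)) :=
        sum_le_sum fun a ha => sum_le_sum fun b _ =>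
          gcd_div_abs_le_sum_dvd (abs_le.2 (mem_Icc.1 ha)) b
    _ = ∑ g ∈ Icc 1 T, (g : ℝ) * ((∑ a ∈ I with (g : ℤ) ∣ a, (|a| : ℝ)⁻¹)
          * #{b ∈ I | (g : ℤ) ∣ b}) := by
        rw [sum_congr rfl fun a _ => sum_comm, sum_comm]
        refine sum_congr rfl fun g _ => ?_
        rw [sum_filter, ← sum_boole, sum_mul_sum, mul_sum]
        exact sum_congr rfl fun a _ => by rw [mul_sum]
    _ ≤ ∑ g ∈ Icc 1 T, (g : ℝ) * (2 * harmonic T / g * ((2 * T + 1) / g + 1)) := by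
        refine sum_le_sum fun g hg => ?_
        have hg : 0 < g := (mem_Icc.1 hg).1
        exact mul_le_mul_of_nonneg_left (mul_le_mul (sum_Icc_filter_dvd_inv_abs_le T hg)
          (card_Icc_filter_dvd_le T hg) (by positivity)
          (by have := harmonic_nonneg T; positivity)) (by positivity)
    _ = 2 * harmonic T * ((2 * T + 1) * harmonic T + T) := by
        have hsum : ∑ g ∈ Icc 1 T, ((g : ℝ))⁻¹ = harmonic T := by
          rw [harmonic_eq_sum_Icc]; push_cast; rfl
        have e : ∀ g ∈ Icc 1 T, (g : ℝ) * (2 * harmonic T / g * ((2 * T + 1) / g + 1))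
            = 2 * harmonic T * ((2 * T + 1) * (g : ℝ)⁻¹ + 1) := by
          intro g hg
          have : (g : ℝ) ≠ 0 := by have := (mem_Icc.1 hg).1; positivity
          field_simp
        rw [sum_congr rfl e, ← mul_sum, sum_add_distrib, ← mul_sum, hsum]
        simp

/-- `harmonic (4 T² + 1) ≍ log T`: the sums below over the values `|m| ≤ 2 T²` of a bilinear
form lose this factor. -/
def logFactor (T : ℕ) : ℝ := harmonic (4 * T ^ 2 + 1)

lemma one_le_logFactor (T : ℕ) : 1 ≤ logFactor T := by
  have : (1 : ℚ) ≤ harmonic (4 * T ^ 2 + 1) :=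
    le_of_eq_of_le (by simp) (single_le_sum (f := fun i : ℕ => ((↑(i + 1) : ℚ))⁻¹)
      (fun i _ => by positivity) (mem_range.2 (Nat.succ_pos _)))
  rw [logFactor]
  exact_mod_cast this

lemma harmonic_le_logFactor (T : ℕ) : (harmonic T : ℝ) ≤ logFactor T := by
  rw [logFactor]
  exact_mod_cast sum_le_sum_of_subset_of_nonneg (range_mono (by nlinarith))
    fun _ _ _ => by positivity

lemma sum_square_decay_le (T : ℕ) {a b : ℤ} (ha : a ≠ 0) (haT : |a| ≤ T) (hbT : |b| ≤ T)
    (c : ℝ) :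
    ∑ p ∈ Icc (-T : ℤ) T ×ˢ Icc (-T : ℤ) T, decay (2 * ((a * p.1 + b * p.2 : ℤ) : ℝ) + c)
      ≤ ((2 * T + 1) * Int.gcd a b / |a| + 1) * (2 * logFactor T) := by
  have hrange : ∀ p ∈ Icc (-T : ℤ) T ×ˢ Icc (-T : ℤ) T, |a * p.1 + b * p.2| ≤ (2 * T ^ 2 : ℕ) := by
    intro p hp
    obtain ⟨h1, h2⟩ := mem_product.1 hp
    have h1 := abs_le.2 (mem_Icc.1 h1)
    have h2 := abs_le.2 (mem_Icc.1 h2)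
    calc |a * p.1 + b * p.2| ≤ |a| * |p.1| + |b| * |p.2| := by
          rw [← abs_mul, ← abs_mul]; exact abs_add_le _ _
      _ ≤ T * T + T * T := add_le_add (mul_le_mul haT h1 (abs_nonneg _) (by positivity))
          (mul_le_mul hbT h2 (abs_nonneg _) (by positivity))
      _ = (2 * T ^ 2 : ℕ) := by push_cast; ring
  have := sum_decay_le_of_card_fiber_le _ (fun p : ℤ × ℤ => a * p.1 + b * p.2) hrange
    (K := (2 * T + 1) * Int.gcd a b / |a| + 1) (card_filter_line_le T ha b) c
  rwa [logFactor, ← show 2 * (2 * T ^ 2) + 1 = 4 * T ^ 2 + 1 by ring]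

lemma sum_sum_square_decay_bound_le (T : ℕ) :
    ∑ a ∈ (Icc (-T : ℤ) T).erase 0, ∑ b ∈ Icc (-T : ℤ) T,
        ((2 * T + 1) * Int.gcd a b / |a| + 1) * (2 * logFactor T)
      ≤ 10 * (2 * T + 1) ^ 2 * logFactor T ^ 3 := by
  set ℓ := logFactor T
  set I := Icc (-T : ℤ) T
  have hℓ : 1 ≤ ℓ := one_le_logFactor T
  have hH : (harmonic T : ℝ) ≤ ℓ := harmonic_le_logFactor T
  have hH0 : (0 : ℝ) ≤ harmonic T := by exact_mod_cast harmonic_nonneg T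
  have hI : (#I : ℝ) = 2 * T + 1 := by
    exact_mod_cast card_Icc_neg_self T
  have hgcd : ∑ a ∈ I.erase 0, ∑ b ∈ I, (Int.gcd a b : ℝ) / |a| ≤ 4 * (2 * T + 1) * ℓ ^ 2 := by
    rw [sum_erase _ (by simp)]
    refine (sum_sum_gcd_div_abs_le T).trans ?_
    have : (2 * T + 1 : ℝ) * harmonic T + T ≤ 2 * (2 * T + 1) * ℓ := by
      nlinarith [(Nat.cast_nonneg T : (0 : ℝ) ≤ T)]
    calc 2 * (harmonic T : ℝ) * ((2 * T + 1) * harmonic T + T)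
        ≤ 2 * ℓ * (2 * (2 * T + 1) * ℓ) := by gcongr
      _ = 4 * (2 * T + 1) * ℓ ^ 2 := by ring
  have hcard : (#(I.erase 0) : ℝ) ≤ 2 * T + 1 := hI ▸ Nat.cast_le.2 card_erase_le
  calc ∑ a ∈ I.erase 0, ∑ b ∈ I, ((2 * T + 1) * Int.gcd a b / |a| + 1) * (2 * ℓ)
      = 2 * ℓ * ((2 * T + 1) * ∑ a ∈ I.erase 0, ∑ b ∈ I, (Int.gcd a b : ℝ) / |a|
          + #(I.erase 0) * #I) := by
        simp only [← sum_mul, sum_add_distrib, mul_sum, sum_const, nsmul_eq_mul, mul_div_assoc]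
        ring
    _ ≤ 2 * ℓ * ((2 * T + 1) * (4 * (2 * T + 1) * ℓ ^ 2) + (2 * T + 1) * (2 * T + 1)) := by
        rw [hI]; gcongr
    _ ≤ 10 * (2 * T + 1) ^ 2 * ℓ ^ 3 := by
        have : ℓ ≤ ℓ ^ 3 := by nlinarith
        nlinarith [mul_le_mul_of_nonneg_left this (sq_nonneg (2 * T + 1 : ℝ))]

def box (d T : ℕ) : Finset (Fin d → ℤ) := Fintype.piFinset fun _ => Icc (-T : ℤ) T

lemma mem_box {d T : ℕ} {u : Fin d → ℤ} : u ∈ box d T ↔ ∀ i, |u i| ≤ T := by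
  simp [box, abs_le]

lemma zero_mem_box (d T : ℕ) : (0 : Fin d → ℤ) ∈ box d T :=
  mem_box.2 fun _ => by rw [Pi.zero_apply, abs_zero]; positivity

lemma card_box (d T : ℕ) : #(box d T) = (2 * T + 1) ^ d := by
  rw [box, Fintype.card_piFinset, prod_const, card_univ, Fintype.card_fin, card_Icc_neg_self]

lemma sum_box_succ {M : Type*} [AddCommMonoid M] (d T : ℕ) (f : (Fin (d + 1) → ℤ) → M) :
    ∑ u ∈ box (d + 1) T, f u = ∑ x ∈ Icc (-T : ℤ) T, ∑ v ∈ box d T, f (Matrix.vecCons x v) := by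
  have h := filter_piFinset_eq_map_consEquiv (fun _ : Fin (d + 1) => Icc (-T : ℤ) T) fun _ => True
  simp only [filter_true] at h
  rw [box, h, sum_map, sum_product]
  rfl

def dotDecaySum (d T : ℕ) (c : (Fin d → ℤ) → ℝ) : ℝ :=
  ∑ u ∈ box d T, ∑ w ∈ box d T, decay (2 * ((u ⬝ᵥ w : ℤ) : ℝ) + c u)

lemma sum_box_decay_cons_cons_dot_le (n T : ℕ) {a b : ℤ} (ha : a ≠ 0) (haT : |a| ≤ T)
    (hbT : |b| ≤ T) (v : Fin n → ℤ) (c : ℝ) :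
    ∑ w ∈ box (n + 2) T, decay (2 * ((Matrix.vecCons a (Matrix.vecCons b v) ⬝ᵥ w : ℤ) : ℝ) + c)
      ≤ (2 * T + 1) ^ n * (((2 * T + 1) * Int.gcd a b / |a| + 1) * (2 * logFactor T)) := by
  simp_rw [sum_box_succ, Matrix.cons_dotProduct_cons]
  rw [sum_congr rfl fun x _ => sum_comm, sum_comm]
  calc _ ≤ ∑ w ∈ box n T, ((2 * T + 1) * Int.gcd a b / |a| + 1) * (2 * logFactor T) := by
        refine sum_le_sum fun w _ => ?_
        rw [← sum_product']
        refine le_of_eq_of_le (sum_congr rfl fun p _ => ?_)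
          (sum_square_decay_le T ha haT hbT (2 * ((v ⬝ᵥ w : ℤ) : ℝ) + c))
        push_cast; ring_nf
    _ = _ := by rw [sum_const, card_box, nsmul_eq_mul]; push_cast; rfl

lemma sum_box_one_decay_dot_le {T : ℕ} {u : Fin 1 → ℤ} (hu : u ∈ box 1 T) (hu0 : u ≠ 0)
    (c : ℝ) : ∑ w ∈ box 1 T, decay (2 * ((u ⬝ᵥ w : ℤ) : ℝ) + c) ≤ 2 * logFactor T := by
  have hu0 : u 0 ≠ 0 := fun h => hu0 (funext fun i => by rw [Fin.fin_one_eq_zero i, h]; rfl)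
  have hrange : ∀ w ∈ box 1 T, |u ⬝ᵥ w| ≤ (2 * T ^ 2 : ℕ) := by
    intro w hw
    rw [dotProduct, Fin.sum_univ_one, abs_mul]
    push_cast
    nlinarith [mem_box.1 hu 0, mem_box.1 hw 0, abs_nonneg (u 0), abs_nonneg (w 0)]
  have hfiber : ∀ m, (#{w ∈ box 1 T | u ⬝ᵥ w = m} : ℝ) ≤ 1 := by
    refine fun m => Nat.cast_le_one.2 (card_le_one.2 fun w hw w' hw' => funext fun i => ?_)
    simp only [mem_filter, dotProduct, Fin.sum_univ_one] at hw hw'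
    rw [Fin.fin_one_eq_zero i]
    exact mul_left_cancel₀ hu0 (hw.2.trans hw'.2.symm)
  have := sum_decay_le_of_card_fiber_le _ (fun w => u ⬝ᵥ w) hrange hfiber c
  rw [logFactor, ← show 2 * (2 * T ^ 2) + 1 = 4 * T ^ 2 + 1 by ring]
  linarith

lemma dotDecaySum_one_le (T : ℕ) (c : (Fin 1 → ℤ) → ℝ) :
    dotDecaySum 1 T c ≤ 3 * (2 * T + 1) * logFactor T := by
  have hℓ := one_le_logFactor T
  have hcard : (#(box 1 T) : ℝ) = 2 * T + 1 := by rw [card_box]; push_cast; ring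
  have hzero : ∑ w ∈ box 1 T, decay (2 * ((0 ⬝ᵥ w : ℤ) : ℝ) + c 0) ≤ 2 * T + 1 := by
    rw [← hcard, ← nsmul_one, ← sum_const]
    exact sum_le_sum fun _ _ => decay_le_one _
  rw [dotDecaySum, ← add_sum_erase _ _ (zero_mem_box 1 T)]
  calc _ ≤ 2 * T + 1 + ∑ u ∈ (box 1 T).erase 0, 2 * logFactor T :=
        add_le_add hzero (sum_le_sum fun u hu =>
          sum_box_one_decay_dot_le (mem_of_mem_erase hu) (ne_of_mem_erase hu) (c u))
    _ ≤ 2 * T + 1 + (2 * T + 1) * (2 * logFactor T) := by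
        rw [sum_const, nsmul_eq_mul, ← hcard]
        exact add_le_add_right (mul_le_mul_of_nonneg_right (by exact_mod_cast card_erase_le)
          (by positivity)) _
    _ ≤ 3 * (2 * T + 1) * logFactor T := by nlinarith

/-- Split off the vectors `u` with `u 0 = 0`, which reduce to dimension `n + 1`; for the others
the first two coordinates of `u` carry the estimate. -/
lemma dotDecaySum_succ_succ_le (n T : ℕ) (c : (Fin (n + 2) → ℤ) → ℝ) {B : ℝ}
    (hB : ∀ c', dotDecaySum (n + 1) T c' ≤ B) :
    dotDecaySum (n + 2) T c
      ≤ (2 * T + 1) * B + (2 * T + 1) ^ (2 * n) * (10 * (2 * T + 1) ^ 2 * logFactor T ^ 3) := by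
  rw [dotDecaySum, sum_box_succ, ← add_sum_erase _ _ (mem_Icc.2 ⟨by simp, by simp⟩ : (0 : ℤ) ∈ _)]
  refine add_le_add ?_ ?_
  · have h := hB fun v => c (Matrix.vecCons 0 v)
    simp_rw [sum_box_succ (d := n + 1), Matrix.cons_dotProduct_cons, zero_mul, zero_add, sum_const,
      card_Icc_neg_self, nsmul_eq_mul, ← mul_sum]
    push_cast
    exact mul_le_mul_of_nonneg_left h (by positivity)
  · calc ∑ a ∈ (Icc (-T : ℤ) T).erase 0, ∑ v ∈ box (n + 1) T, ∑ w ∈ box (n + 2) T,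
          decay (2 * ((Matrix.vecCons a v ⬝ᵥ w : ℤ) : ℝ) + c (Matrix.vecCons a v))
        ≤ ∑ a ∈ (Icc (-T : ℤ) T).erase 0, ∑ b ∈ Icc (-T : ℤ) T, ∑ v ∈ box n T,
          (2 * T + 1) ^ n * (((2 * T + 1) * Int.gcd a b / |a| + 1) * (2 * logFactor T)) := by
          refine sum_le_sum fun a ha => ?_
          obtain ⟨ha0, ha⟩ := mem_erase.1 ha
          rw [sum_box_succ]
          exact sum_le_sum fun b hb => sum_le_sum fun v _ =>
            sum_box_decay_cons_cons_dot_le n T ha0 (abs_le.2 (mem_Icc.1 ha))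
              (abs_le.2 (mem_Icc.1 hb)) v _
      _ = (2 * T + 1) ^ (2 * n) * ∑ a ∈ (Icc (-T : ℤ) T).erase 0, ∑ b ∈ Icc (-T : ℤ) T,
          ((2 * T + 1) * Int.gcd a b / |a| + 1) * (2 * logFactor T) := by
          simp only [sum_const, card_box, nsmul_eq_mul, mul_sum]
          push_cast
          refine sum_congr rfl fun a _ => sum_congr rfl fun b _ => ?_
          ring
      _ ≤ _ := by
          gcongr
          exact sum_sum_square_decay_bound_le T

lemma dotDecaySum_le (n T : ℕ) (c : (Fin (n + 2) → ℤ) → ℝ) :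
    dotDecaySum (n + 2) T c ≤ 13 * (n + 1) * (2 * T + 1) ^ (2 * n + 2) * logFactor T ^ 3 := by
  have hℓ3 : logFactor T ≤ logFactor T ^ 3 := le_self_pow₀ (one_le_logFactor T) (by norm_num)
  have hℓ0 : 0 ≤ logFactor T ^ 3 := by linarith [one_le_logFactor T]
  have hX : (1 : ℝ) ≤ 2 * T + 1 := by linarith [(Nat.cast_nonneg T : (0 : ℝ) ≤ T)]
  induction n with
  | zero =>
    refine (dotDecaySum_succ_succ_le 0 T c (dotDecaySum_one_le T)).trans ?_
    have := mul_le_mul_of_nonneg_left hℓ3 (by positivity : (0 : ℝ) ≤ (2 * T + 1) ^ 2)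
    norm_num
    linarith
  | succ n ih =>
    refine (dotDecaySum_succ_succ_le (n + 1) T c ih).trans ?_
    have hpow : (2 * T + 1 : ℝ) * (2 * T + 1) ^ (2 * n + 2) ≤ (2 * T + 1) ^ (2 * (n + 1) + 2) := by
      rw [← pow_succ']; exact pow_le_pow_right₀ hX (by omega)
    have hpow' : (2 * T + 1 : ℝ) ^ (2 * (n + 1)) * (2 * T + 1) ^ 2
        = (2 * T + 1) ^ (2 * (n + 1) + 2) := by rw [← pow_add]
    have h1 := mul_le_mul_of_nonneg_right hpow
      (by positivity : (0 : ℝ) ≤ 13 * (n + 1) * logFactor T ^ 3)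
    have h2 : (0 : ℝ) ≤ (2 * T + 1) ^ (2 * (n + 1) + 2) * logFactor T ^ 3 := by positivity
    push_cast
    linear_combination h1 + 10 * logFactor T ^ 3 * hpow' + 3 * h2

lemma exists_logFactor_pow_three_le {κ : ℝ} (hκ : 0 < κ) :
    ∃ C, 0 < C ∧ ∀ T : ℕ, 1 ≤ T → logFactor T ^ 3 ≤ C * (T : ℝ) ^ κ := by
  set C₁ := 1 + Real.log 5 + 6 / κ with hC₁def
  have hC₁ : 0 < C₁ := by have := Real.log_nonneg (by norm_num : (1 : ℝ) ≤ 5); positivity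
  refine ⟨C₁ ^ 3, by positivity, fun T hT => ?_⟩
  have hT : (1 : ℝ) ≤ T := by exact_mod_cast hT
  have hTκ : 1 ≤ (T : ℝ) ^ (κ / 3) := Real.one_le_rpow hT (by positivity)
  have hlog : logFactor T ≤ C₁ * (T : ℝ) ^ (κ / 3) := by
    calc logFactor T ≤ 1 + Real.log (5 * T ^ 2) := by
          have : Real.log ((4 * T ^ 2 + 1 : ℕ) : ℝ) ≤ Real.log (5 * T ^ 2) :=
            Real.log_le_log (by positivity) (by push_cast; nlinarith)
          rw [logFactor]
          linarith [harmonic_le_one_add_log (4 * T ^ 2 + 1)]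
      _ = 1 + Real.log 5 + 2 * Real.log T := by
          rw [Real.log_mul (by norm_num) (by positivity), Real.log_pow]; push_cast; ring
      _ ≤ (1 + Real.log 5) * (T : ℝ) ^ (κ / 3) + 2 * ((T : ℝ) ^ (κ / 3) / (κ / 3)) := by
          have := Real.log_nonneg (by norm_num : (1 : ℝ) ≤ 5)
          gcongr
          · nlinarith
          · exact Real.log_le_rpow_div (by positivity) (by positivity)
      _ = C₁ * (T : ℝ) ^ (κ / 3) := by rw [hC₁def]; field_simp; ring
  calc logFactor T ^ 3 ≤ (C₁ * (T : ℝ) ^ (κ / 3)) ^ 3 := by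
        gcongr; linarith [one_le_logFactor T]
    _ = C₁ ^ 3 * (T : ℝ) ^ κ := by
        rw [mul_pow, ← Real.rpow_natCast ((T : ℝ) ^ (κ / 3)), ← Real.rpow_mul (by positivity)]
        norm_num

lemma exists_dotDecaySum_le {d : ℕ} (hd : 2 ≤ d) {κ : ℝ} (hκ : 0 < κ) :
    ∃ C, 0 < C ∧ ∀ T : ℕ, 1 ≤ T → ∀ c, dotDecaySum d T c ≤ C * (T : ℝ) ^ (2 * (d : ℝ) - 2 + κ) := by
  obtain ⟨n, rfl⟩ := Nat.exists_eq_add_of_le' hd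
  obtain ⟨C, hC, hlog⟩ := exists_logFactor_pow_three_le hκ
  refine ⟨13 * (n + 1) * 3 ^ (2 * n + 2) * C, by positivity, fun T hT c => ?_⟩
  have hT' : (1 : ℝ) ≤ T := by exact_mod_cast hT
  calc dotDecaySum (n + 2) T c ≤ 13 * (n + 1) * (2 * T + 1) ^ (2 * n + 2) * logFactor T ^ 3 :=
        dotDecaySum_le n T c
    _ ≤ 13 * (n + 1) * (3 * T) ^ (2 * n + 2) * (C * (T : ℝ) ^ κ) := by
        have := one_le_logFactor T
        refine mul_le_mul (mul_le_mul_of_nonneg_left (pow_le_pow_left₀ (by positivity)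
          (by linarith) _) (by positivity)) (hlog T hT) (by positivity) (by positivity)
    _ = 13 * (n + 1) * 3 ^ (2 * n + 2) * C * (T : ℝ) ^ (2 * ((n + 2 : ℕ) : ℝ) - 2 + κ) := by
        rw [Real.rpow_add (by positivity),
          show 2 * ((n + 2 : ℕ) : ℝ) - 2 = ((2 * n + 2 : ℕ) : ℝ) by push_cast; ring,
          Real.rpow_natCast, mul_pow]
        ring

lemma abs_le_znorm {d : ℕ} (k : Fin d → ℤ) (i : Fin d) : |(k i : ℝ)| ≤ znorm k := by
  rw [znorm, ← Real.sqrt_sq_eq_abs]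
  exact Real.sqrt_le_sqrt (single_le_sum (f := fun i => ((k i : ℝ)) ^ 2)
    (fun _ _ => sq_nonneg _) (mem_univ i))

lemma mem_box_floor_of_znorm_le {d : ℕ} {k : Fin d → ℤ} {r : ℝ} (h : znorm k ≤ r) :
    k ∈ box d ⌊r⌋₊ := by
  refine mem_box.2 fun i => ?_
  have : (k i).natAbs ≤ ⌊r⌋₊ :=
    Nat.le_floor (by rw [Nat.cast_natAbs, Int.cast_abs]; exact (abs_le_znorm k i).trans h)
  rw [Int.abs_eq_natAbs]
  exact_mod_cast this

lemma nsq_sub {d : ℕ} (x y : Fin d → ℤ) :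
    nsq (x - y) = nsq x - 2 * ((x ⬝ᵥ y : ℤ) : ℝ) + nsq y := by
  have h : ∀ k : Fin d → ℤ, nsq k = ((k ⬝ᵥ k : ℤ) : ℝ) := fun k => by simp [nsq, dotProduct, sq]
  rw [h, h, h]
  push_cast [sub_dotProduct, dotProduct_sub, dotProduct_comm y x]
  ring

lemma sum_box_decay_sub_dot_le {d S : ℕ} {k₀ : Fin d → ℤ} (hk₀ : k₀ ∈ box d S)
    (c : (Fin d → ℤ) → ℝ) :
    ∑ v ∈ box d S, ∑ w ∈ box d S, decay (2 * (((k₀ - v) ⬝ᵥ w : ℤ) : ℝ) + c v)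
      ≤ dotDecaySum d (2 * S) fun u => c (k₀ - u) := by
  have hmono : box d S ⊆ box d (2 * S) := fun u hu =>
    mem_box.2 fun i => (mem_box.1 hu i).trans (by push_cast; linarith)
  have hsub : (box d S).image (k₀ - ·) ⊆ box d (2 * S) := by
    refine image_subset_iff.2 fun v hv => mem_box.2 fun i => ?_
    rw [Pi.sub_apply]
    refine (abs_sub _ _).trans ?_
    push_cast
    linarith [mem_box.1 hk₀ i, mem_box.1 hv i]
  calc ∑ v ∈ box d S, ∑ w ∈ box d S, decay (2 * (((k₀ - v) ⬝ᵥ w : ℤ) : ℝ) + c v)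
      ≤ ∑ v ∈ box d S, ∑ w ∈ box d (2 * S),
          decay (2 * (((k₀ - v) ⬝ᵥ w : ℤ) : ℝ) + c (k₀ - (k₀ - v))) := by
        simp_rw [sub_sub_cancel]
        exact sum_le_sum fun v _ =>
          sum_le_sum_of_subset_of_nonneg hmono fun _ _ _ => decay_nonneg _
    _ = ∑ u ∈ (box d S).image (k₀ - ·), ∑ w ∈ box d (2 * S),
          decay (2 * ((u ⬝ᵥ w : ℤ) : ℝ) + c (k₀ - u)) :=
        by rw [sum_image fun _ _ _ _ h => sub_right_injective h]
    _ ≤ dotDecaySum d (2 * S) fun u => c (k₀ - u) :=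
        sum_le_sum_of_subset_of_nonneg hsub fun _ _ _ => sum_nonneg fun _ _ => decay_nonneg _

lemma exists_sum_decay_eq {d S : ℕ} (k₀ : Fin d → ℤ) (α : ℝ) {σ σ' : ℝ}
    (hσ : σ = 1 ∨ σ = -1) (hσ' : σ' = 1 ∨ σ' = -1) (hσσ' : ¬(σ = 1 ∧ σ' = 1)) :
    ∃ c : (Fin d → ℤ) → ℝ,
      ∑ p ∈ box d S ×ˢ box d S, decay (nsq p.1 + σ' * nsq p.2 + σ * nsq (k₀ - p.1 - p.2) - α)
        = ∑ v ∈ box d S, ∑ w ∈ box d S, decay (2 * (((k₀ - v) ⬝ᵥ w : ℤ) : ℝ) + c v) := by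
  rw [sum_product]
  rcases hσ with rfl | rfl <;> rcases hσ' with rfl | rfl
  · exact absurd ⟨rfl, rfl⟩ hσσ'
  · refine ⟨fun v => α - nsq v - nsq (k₀ - v), sum_congr rfl fun v _ => sum_congr rfl fun w _ => ?_⟩
    rw [← decay_neg, nsq_sub]
    ring_nf
  · refine ⟨fun v => nsq v - nsq (k₀ - v) - α, sum_congr rfl fun v _ => sum_congr rfl fun w _ => ?_⟩
    rw [nsq_sub]
    ring_nf
  · refine ⟨fun v => -nsq v - nsq (k₀ - v) - α, ?_⟩
    rw [sum_comm]
    refine sum_congr rfl fun v _ => sum_congr rfl fun w _ => ?_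
    rw [sub_right_comm, nsq_sub]
    ring_nf

lemma natCast_two_mul_floor_inv_rpow_le {ε r : ℝ} (hε : 0 < ε) (hr : 0 ≤ r) :
    ((2 * ⌊ε⁻¹⌋₊ : ℕ) : ℝ) ^ r ≤ 2 ^ r * ε ^ (-r) := by
  rw [Real.rpow_neg hε.le, ← Real.inv_rpow hε.le, ← Real.mul_rpow (by norm_num) (by positivity)]
  refine Real.rpow_le_rpow (by positivity) ?_ hr
  push_cast
  linarith [Nat.floor_le (inv_nonneg.2 hε.le)]

/-- Degree two vertex estimate (Lemma B.1, sum version). -/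
theorem degree_two_vertex_sum (d : ℕ) (hd : 2 ≤ d) (κ : ℝ) (hκ : 0 < κ) :
    ∃ C : ℝ, 0 < C ∧
      ∀ ε : ℝ, 0 < ε → ε ≤ 1 →
      ∀ k₀ : Fin d → ℤ, znorm k₀ ≤ ε⁻¹ →
      ∀ α β : ℝ, 1 ≤ β →
      ∀ σ σ' : ℝ, (σ = 1 ∨ σ = -1) → (σ' = 1 ∨ σ' = -1) → ¬(σ = 1 ∧ σ' = 1) →
        (∑' p : (Fin d → ℤ) × (Fin d → ℤ),
          if znorm p.1 < ε⁻¹ ∧ znorm p.2 < ε⁻¹ then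
            (‖(((nsq p.1 + σ' * nsq p.2 + σ * nsq (k₀ - p.1 - p.2) - α : ℝ) : ℂ)
              + Complex.I * (β : ℂ))‖)⁻¹
          else 0)
        ≤ C * ε ^ (2 - 2*(d:ℝ) - κ) := by
  obtain ⟨C, hC, hbound⟩ := exists_dotDecaySum_le hd hκ
  refine ⟨C * 2 ^ (2 * (d : ℝ) - 2 + κ), by positivity, ?_⟩
  intro ε hε hε1 k₀ hk₀ α β hβ σ σ' hσ hσ' hσσ'
  set S := ⌊ε⁻¹⌋₊
  have hS : 1 ≤ S := Nat.le_floor (by rw [Nat.cast_one]; exact one_le_inv₀ hε |>.2 hε1)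
  obtain ⟨c, hc⟩ := exists_sum_decay_eq (S := S) k₀ α hσ hσ' hσσ'
  rw [tsum_eq_sum (s := box d S ×ˢ box d S) fun p hp => if_neg fun h => hp (mem_product.2
    ⟨mem_box_floor_of_znorm_le h.1.le, mem_box_floor_of_znorm_le h.2.le⟩)]
  calc _ ≤ ∑ p ∈ box d S ×ˢ box d S,
        decay (nsq p.1 + σ' * nsq p.2 + σ * nsq (k₀ - p.1 - p.2) - α) := sum_le_sum fun p _ => by
          split_ifs
          · exact inv_norm_add_I_mul_le_decay _ hβ
          · exact decay_nonneg _
    _ ≤ dotDecaySum d (2 * S) fun u => c (k₀ - u) :=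
        hc ▸ sum_box_decay_sub_dot_le (mem_box_floor_of_znorm_le hk₀) c
    _ ≤ C * ((2 * S : ℕ) : ℝ) ^ (2 * (d : ℝ) - 2 + κ) := hbound _ (by omega) _
    _ ≤ C * (2 ^ (2 * (d : ℝ) - 2 + κ) * ε ^ (-(2 * (d : ℝ) - 2 + κ))) := by
        have : (2 : ℝ) ≤ d := by exact_mod_cast hd
        exact mul_le_mul_of_nonneg_left
          (natCast_two_mul_floor_inv_rpow_le hε (by linarith)) hC.le
    _ = C * 2 ^ (2 * (d : ℝ) - 2 + κ) * ε ^ (2 - 2 * (d : ℝ) - κ) := by ring_nf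

end KWE
end
end

section
/- Let d ≥ 2. For every κ > 0 there exists a constant C = C(d,κ) such that for all ε ∈ (0,1], all k₀ ∈ ℤ^d with |k₀| ≤ ε^{-1}, all α ∈ ℝ and all β ≥ 1: ∑_{k ∈ ℤ^d, |k| < ε^{-1}} 1/| |k|² + |k₀ − k|² − α + iβ | ≤ C ε^{1 − d − κ}. -/
/-!
For `β ≥ 1` each term is at most `1 / max 1 |m - α|`, where `m = |k|² + |k₀ - k|²` is an integer
in `[0, 5 d N²]` on the box `[-N, N]^d`, `N = ⌈ε⁻¹⌉`. Once all coordinates of `k` but the first are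
fixed, `m` is a quadratic polynomial in the first one, so every value of `m` is taken at most
`2 (2N + 1)^(d-1)` times on the box. Summing `1 / max 1 |m - α|` over the possible values of `m`
costs only a logarithm, which is absorbed into `ε^(-κ)`.
-/

open scoped BigOperators Classical

noncomputable section

namespace KWE

open Finset

lemma inv_norm_ofReal_add_I_mul_le {X β : ℝ} (hβ : 1 ≤ β) :
    ‖(X : ℂ) + Complex.I * β‖⁻¹ ≤ (max 1 |X|)⁻¹ := by
  refine inv_anti₀ (by positivity) (max_le ?_ ?_)
  · calc (1 : ℝ) ≤ |β| := hβ.trans (le_abs_self β)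
      _ = |((X : ℂ) + Complex.I * β).im| := by simp
      _ ≤ _ := Complex.abs_im_le_norm _
  · simpa using Complex.abs_re_le_norm ((X : ℂ) + Complex.I * β)

lemma sum_range_inv_max_one_le (M : ℕ) :
    ∑ i ∈ range (M + 1), (max 1 (i : ℝ))⁻¹ ≤ 2 + Real.log (M + 1) := by
  have hharm : ∑ i ∈ range M, (max 1 ((i + 1 : ℕ) : ℝ))⁻¹ = harmonic M := by
    simp only [harmonic, Rat.cast_sum, Rat.cast_inv, Rat.cast_natCast]
    refine sum_congr rfl fun i _ => ?_
    rw [max_eq_right (by simp)]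
  have hlog : Real.log M ≤ Real.log (M + 1) := by
    rcases M.eq_zero_or_pos with rfl | hM
    · simp
    · exact Real.log_le_log (by positivity) (by linarith)
  rw [sum_range_succ', hharm, Nat.cast_zero, max_eq_left zero_le_one, inv_one]
  linarith [harmonic_le_one_add_log M]

lemma sum_le_two_add_log_of_injOn {ι : Type*} {s : Finset ι} {t : ι → ℝ}
    {j : ι → ℕ} {M : ℕ} (hj : Set.InjOn j s) (hjM : ∀ n ∈ s, j n ≤ M)
    (ht : ∀ n ∈ s, t n ≤ (max 1 (j n : ℝ))⁻¹) :
    ∑ n ∈ s, t n ≤ 2 + Real.log (M + 1) :=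
  calc ∑ n ∈ s, t n ≤ ∑ n ∈ s, (max 1 (j n : ℝ))⁻¹ := sum_le_sum ht
    _ = ∑ i ∈ s.image j, (max 1 (i : ℝ))⁻¹ :=
        (sum_image (f := fun i : ℕ => (max 1 (i : ℝ))⁻¹) hj).symm
    _ ≤ ∑ i ∈ range (M + 1), (max 1 (i : ℝ))⁻¹ :=
        sum_le_sum_of_subset_of_nonneg
          (fun i hi => by
            obtain ⟨n, hn, rfl⟩ := mem_image.1 hi
            exact mem_range.2 (Nat.lt_succ_of_le (hjM n hn)))
          (fun _ _ _ => by positivity)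
    _ ≤ 2 + Real.log (M + 1) := sum_range_inv_max_one_le M

lemma sum_Icc_inv_max_one_abs_sub_le (M : ℕ) (α : ℝ) :
    ∑ n ∈ Icc (0 : ℤ) M, (max 1 |(n : ℝ) - α|)⁻¹ ≤ 2 * (2 + Real.log (M + 1)) := by
  set a : ℤ := ⌈α⌉
  have hαa : α ≤ a := Int.le_ceil α
  have haα : (a : ℝ) - 1 < α := by linarith [Int.ceil_lt_add_one α]
  rw [← sum_filter_add_sum_filter_not (Icc (0 : ℤ) M) (· < a), two_mul]
  refine add_le_add
    (sum_le_two_add_log_of_injOn (j := fun n => (min (a - 1) M - n).toNat) ?_ ?_ ?_)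
    (sum_le_two_add_log_of_injOn (j := fun n => (n - max a 0).toNat) ?_ ?_ ?_)
  · intro x hx y hy h
    simp only [mem_coe, mem_filter, mem_Icc] at hx hy h
    omega
  · intro n hn
    simp only [mem_filter, mem_Icc] at hn
    omega
  · intro n hn
    simp only [mem_filter, mem_Icc] at hn
    have hj : (((min (a - 1) M - n).toNat : ℕ) : ℝ) = ((min (a - 1) M : ℤ) : ℝ) - n := by
      exact_mod_cast Int.toNat_of_nonneg (by omega)
    have hmin : ((min (a - 1) M : ℤ) : ℝ) ≤ a - 1 := by exact_mod_cast min_le_left (a - 1) M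
    rw [hj, abs_sub_comm]
    exact inv_anti₀ (by positivity) (max_le_max le_rfl (by linarith [le_abs_self (α - n)]))
  · intro x hx y hy h
    simp only [mem_coe, mem_filter, mem_Icc] at hx hy h
    omega
  · intro n hn
    simp only [mem_filter, mem_Icc] at hn
    omega
  · intro n hn
    simp only [mem_filter, mem_Icc, not_lt] at hn
    have hj : (((n - max a 0).toNat : ℕ) : ℝ) = n - ((max a 0 : ℤ) : ℝ) := by
      exact_mod_cast Int.toNat_of_nonneg (by omega)
    have hmax : (a : ℝ) ≤ ((max a 0 : ℤ) : ℝ) := by exact_mod_cast le_max_left a 0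
    rw [hj]
    exact inv_anti₀ (by positivity) (max_le_max le_rfl (by linarith [le_abs_self ((n : ℝ) - α)]))

lemma sum_inv_max_one_abs_sub_le_of_card_fiber_le {ι : Type*} {s : Finset ι} {m : ι → ℤ}
    {M F : ℕ} (hm : ∀ k ∈ s, m k ∈ Icc (0 : ℤ) M) (hF : ∀ n, #{k ∈ s | m k = n} ≤ F) (α : ℝ) :
    ∑ k ∈ s, (max 1 |(m k : ℝ) - α|)⁻¹ ≤ F * (2 * (2 + Real.log (M + 1))) :=
  calc ∑ k ∈ s, (max 1 |(m k : ℝ) - α|)⁻¹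
      = ∑ n ∈ Icc (0 : ℤ) M, #{k ∈ s | m k = n} * (max 1 |(n : ℝ) - α|)⁻¹ := by
        rw [← sum_fiberwise_of_maps_to hm]
        refine sum_congr rfl fun n _ => ?_
        rw [sum_congr rfl fun k hk => by rw [(mem_filter.1 hk).2], sum_const, nsmul_eq_mul]
    _ ≤ ∑ n ∈ Icc (0 : ℤ) M, F * (max 1 |(n : ℝ) - α|)⁻¹ := by
        gcongr with n
        exact_mod_cast hF n
    _ ≤ F * (2 * (2 + Real.log (M + 1))) := by
        rw [← mul_sum]
        gcongr
        exact sum_Icc_inv_max_one_abs_sub_le M α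

def latticeBox (d N : ℕ) : Finset (Fin d → ℤ) := Fintype.piFinset fun _ => Icc (-(N : ℤ)) N

lemma mem_latticeBox {d N : ℕ} {k : Fin d → ℤ} : k ∈ latticeBox d N ↔ ∀ i, |k i| ≤ N := by
  simp only [latticeBox, Fintype.mem_piFinset, mem_Icc, abs_le]

lemma card_latticeBox (d N : ℕ) : #(latticeBox d N) = (2 * N + 1) ^ d := by
  simp only [latticeBox, Fintype.card_piFinset, Int.card_Icc, prod_const, card_univ,
    Fintype.card_fin]
  congr 1
  omega

lemma mem_latticeBox_of_znorm_le {d N : ℕ} {k : Fin d → ℤ} (hk : znorm k ≤ N) :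
    k ∈ latticeBox d N :=
  mem_latticeBox.2 fun i => by exact_mod_cast (abs_le_znorm k i).trans hk

def quadForm {d : ℕ} (k₀ k : Fin d → ℤ) : ℤ := ∑ i, k i ^ 2 + ∑ i, (k₀ i - k i) ^ 2

lemma cast_quadForm {d : ℕ} (k₀ k : Fin d → ℤ) :
    (quadForm k₀ k : ℝ) = nsq k + nsq (k₀ - k) := by
  simp only [quadForm, nsq, Pi.sub_apply]
  push_cast
  ring

lemma quadForm_succ {e : ℕ} (k₀ k : Fin (e + 1) → ℤ) :
    quadForm k₀ k = k 0 ^ 2 + (k₀ 0 - k 0) ^ 2 + quadForm (Fin.tail k₀) (Fin.tail k) := by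
  simp only [quadForm, Fin.sum_univ_succ, Fin.tail]
  ring

lemma quadForm_mem_Icc {d N : ℕ} {k₀ k : Fin d → ℤ} (hk₀ : k₀ ∈ latticeBox d N)
    (hk : k ∈ latticeBox d N) : quadForm k₀ k ∈ Icc (0 : ℤ) (5 * d * N ^ 2 : ℕ) := by
  rw [mem_latticeBox] at hk₀ hk
  have hsq : ∀ i, k i ^ 2 + (k₀ i - k i) ^ 2 ≤ 5 * N ^ 2 := fun i => by
    have := abs_le.1 (hk i)
    have := abs_le.1 (hk₀ i)
    nlinarith
  refine mem_Icc.2 ⟨by unfold quadForm; positivity, ?_⟩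
  calc quadForm k₀ k = ∑ i, (k i ^ 2 + (k₀ i - k i) ^ 2) := (sum_add_distrib).symm
    _ ≤ ∑ _i : Fin d, 5 * (N : ℤ) ^ 2 := sum_le_sum fun i _ => hsq i
    _ = (5 * d * N ^ 2 : ℕ) := by
        simp only [sum_const, card_univ, Fintype.card_fin]
        push_cast
        ring

lemma eq_of_sq_add_sub_sq_eq {a x y : ℤ} (h : x ^ 2 + (a - x) ^ 2 = y ^ 2 + (a - y) ^ 2)
    (hxy : 0 ≤ 2 * x - a ↔ 0 ≤ 2 * y - a) : x = y := by
  have : (x - y) * (2 * x + 2 * y - 2 * a) = 0 := by linear_combination h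
  rcases mul_eq_zero.1 this with h' | h' <;> omega

/-- A lattice point is determined by its tail, its value of `quadForm k₀` and the side of `k₀ 0 / 2`
on which `k 0` lies. -/
lemma card_filter_quadForm_eq_le {e : ℕ} (N : ℕ) (k₀ : Fin (e + 1) → ℤ) (n : ℤ) :
    #{k ∈ latticeBox (e + 1) N | quadForm k₀ k = n} ≤ 2 * (2 * N + 1) ^ e := by
  calc #{k ∈ latticeBox (e + 1) N | quadForm k₀ k = n}
      ≤ #(latticeBox e N ×ˢ (univ : Finset Bool)) := by
        refine card_le_card_of_injOn (fun k => (Fin.tail k, decide (0 ≤ 2 * k 0 - k₀ 0))) ?_ ?_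
        · intro k hk
          simp only [mem_coe, mem_filter, mem_latticeBox] at hk
          simp only [coe_product, coe_univ, Set.mem_prod, mem_coe, mem_latticeBox, Set.mem_univ,
            and_true]
          exact fun i => hk.1 i.succ
        · intro k hk k' hk' hkk
          simp only [mem_coe, mem_filter] at hk hk'
          simp only [Prod.mk.injEq, decide_eq_decide] at hkk
          have h0 : k 0 = k' 0 := by
            refine eq_of_sq_add_sub_sq_eq (a := k₀ 0) ?_ hkk.2
            have := hk.2
            rw [quadForm_succ, ← hk'.2, quadForm_succ, hkk.1] at this
            linarith
          rw [← Fin.cons_self_tail k, ← Fin.cons_self_tail k', h0, hkk.1]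
    _ = 2 * (2 * N + 1) ^ e := by
        rw [card_product, card_latticeBox, card_univ, Fintype.card_bool, mul_comm]

lemma two_add_log_le_mul_rpow {κ t : ℝ} (hκ : 0 < κ) (ht : 1 ≤ t) {d N : ℕ} (hd : 1 ≤ d)
    (hN : (N : ℝ) ≤ 2 * t) :
    2 + Real.log ((5 * d * N ^ 2 : ℕ) + 1) ≤ (2 + Real.log (21 * d) + 2 / κ) * t ^ κ := by
  have hd' : (1 : ℝ) ≤ d := by exact_mod_cast hd
  have ht2 : 1 ≤ t ^ 2 := one_le_pow₀ ht
  have hN2 : (N : ℝ) ^ 2 ≤ 4 * t ^ 2 := by nlinarith [(N.cast_nonneg : (0 : ℝ) ≤ N)]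
  have hM : ((5 * d * N ^ 2 : ℕ) : ℝ) + 1 ≤ 21 * d * t ^ 2 := by
    push_cast
    nlinarith
  have hlog : Real.log (((5 * d * N ^ 2 : ℕ) : ℝ) + 1) ≤ Real.log (21 * d) + 2 * (t ^ κ / κ) :=
    calc Real.log (((5 * d * N ^ 2 : ℕ) : ℝ) + 1) ≤ Real.log (21 * d * t ^ 2) :=
          Real.log_le_log (by positivity) hM
      _ = Real.log (21 * d) + 2 * Real.log t := by
          rw [Real.log_mul (by positivity) (by positivity), Real.log_pow, Nat.cast_ofNat]
      _ ≤ Real.log (21 * d) + 2 * (t ^ κ / κ) := by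
          gcongr
          exact Real.log_le_rpow_div (by linarith) hκ
  have htκ : 1 ≤ t ^ κ := Real.one_le_rpow ht hκ.le
  have hlog21 : 0 ≤ Real.log (21 * d) := Real.log_nonneg (by linarith)
  have : 2 * (t ^ κ / κ) = 2 / κ * t ^ κ := by ring
  nlinarith

/-- Degree one vertex estimate (Lemma B.2, first part). -/
theorem degree_one_vertex_sum (d : ℕ) (hd : 2 ≤ d) (κ : ℝ) (hκ : 0 < κ) :
    ∃ C : ℝ, 0 < C ∧
      ∀ ε : ℝ, 0 < ε → ε ≤ 1 →
      ∀ k₀ : Fin d → ℤ, znorm k₀ ≤ ε⁻¹ →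
      ∀ α β : ℝ, 1 ≤ β →
        (∑' k : Fin d → ℤ,
          if znorm k < ε⁻¹ then
            (‖((nsq k + nsq (k₀ - k) - α : ℝ) : ℂ) + Complex.I * (β : ℂ)‖)⁻¹
          else 0)
        ≤ C * ε ^ (1 - (d:ℝ) - κ) := by
  obtain ⟨e, rfl⟩ : ∃ e, d = e + 1 := ⟨d - 1, by omega⟩
  have hlog21 : 0 ≤ Real.log (21 * ((e + 1 : ℕ) : ℝ)) := Real.log_nonneg (by push_cast; linarith)
  refine ⟨4 * 5 ^ e * (2 + Real.log (21 * ((e + 1 : ℕ) : ℝ)) + 2 / κ), by positivity, ?_⟩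
  intro ε hε hε1 k₀ hk₀ α β hβ
  have ht : 1 ≤ ε⁻¹ := one_le_inv_iff₀.2 ⟨hε, hε1⟩
  set N := ⌈ε⁻¹⌉₊
  have hN : ε⁻¹ ≤ N := Nat.le_ceil _
  have hN2 : (N : ℝ) ≤ 2 * ε⁻¹ := by linarith [Nat.ceil_lt_add_one (zero_le_one.trans ht)]
  rw [tsum_eq_sum (s := latticeBox (e + 1) N) fun k hk =>
    if_neg fun h => hk (mem_latticeBox_of_znorm_le (h.le.trans hN))]
  calc _ ≤ ∑ k ∈ latticeBox (e + 1) N, (max 1 |(quadForm k₀ k : ℝ) - α|)⁻¹ := by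
        refine sum_le_sum fun k _ => ?_
        split_ifs
        · rw [cast_quadForm]
          exact inv_norm_ofReal_add_I_mul_le hβ
        · positivity
    _ ≤ (2 * (2 * N + 1) ^ e : ℕ) * (2 * (2 + Real.log ((5 * (e + 1) * N ^ 2 : ℕ) + 1))) :=
        sum_inv_max_one_abs_sub_le_of_card_fiber_le
          (fun k hk => quadForm_mem_Icc (mem_latticeBox_of_znorm_le (hk₀.trans hN)) hk)
          (card_filter_quadForm_eq_le N k₀) α
    _ ≤ (2 * (5 * ε⁻¹) ^ e) *
          (2 * ((2 + Real.log (21 * ((e + 1 : ℕ) : ℝ)) + 2 / κ) * ε⁻¹ ^ κ)) := by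
        have := two_add_log_le_mul_rpow hκ ht (Nat.le_add_left 1 e) hN2
        have hlogM : 0 ≤ Real.log (((5 * (e + 1) * N ^ 2 : ℕ) : ℝ) + 1) :=
          Real.log_nonneg (le_add_of_nonneg_left (Nat.cast_nonneg _))
        push_cast at this hlogM ⊢
        gcongr
        linarith
    _ = _ := by
        rw [show 1 - ((e + 1 : ℕ) : ℝ) - κ = -(e + κ) by push_cast; ring, Real.rpow_neg hε.le,
          ← Real.inv_rpow hε.le, Real.rpow_add (by positivity), Real.rpow_natCast]
        ring

end KWE
end
end

section
/- Let m ≥ 2 be an integer, let e₁, …, e_m ∈ ℝ, let η > 0 and let t > 0. Then ∫_{Δ} exp(−i ∑_{k=1}^{m−1} s_k e_k) · exp(−i (t − ∑_{k=1}^{m−1} s_k) e_m) ds₁ … ds_{m−1} = (e^{ηt}/(2π)) ∫_ℝ e^{−iαt} ∏_{k=1}^{m} i/(α − e_k + iη) dα, where Δ = { (s₁,…,s_{m−1}) ∈ [0,∞)^{m−1} : s₁ + ⋯ + s_{m−1} ≤ t } and the integrand on the right-hand side is absolutely integrable over α ∈ ℝ. (This is the parametrization, by the coordinates s₁,…,s_{m−1},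 of the integral ∫_{ℝ₊^m} ∏_{k=1}^m e^{−i s_k e_k} δ(∑_{k=1}^m s_k − t) ds.) -/
/-!
Put `z k = -η - i e k`. Multiplied by `e^{-η t}`, the left-hand side is the value at `t` of the
`(n+1)`-fold convolution `F` of the one-sided exponentials `u ↦ 1_{u ≥ 0} e^{z k u}`, written with
the last integration variable eliminated. By Fubini, `F` is integrable with Fourier transform
`∏ k, -(z k - 2π i ξ)⁻¹`, which is the product of the resolvents `i / (α - e k + i η)` at
`α = -2πξ`. With at least two factors this product is integrable (two factors are in `L²`, the
others are bounded by `1/η`), and `F` is continuous at `t` because its integrand jumps only on the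
null hyperplane `∑ s = t`; Fourier inversion at `t` gives the identity.
-/

open scoped BigOperators Classical FourierTransform Real
open MeasureTheory Complex Set

noncomputable section

namespace KWE

def oneSidedExp (z : ℂ) : ℝ → ℂ := (Ici 0).indicator fun u => cexp (z * u)

theorem measurable_oneSidedExp (z : ℂ) : Measurable (oneSidedExp z) :=
  (measurable_exp.comp (measurable_const.mul measurable_ofReal)).indicator measurableSet_Ici

theorem integrable_oneSidedExp {z : ℂ} (hz : z.re < 0) : Integrable (oneSidedExp z) := by
  rw [oneSidedExp, integrable_indicator_iff measurableSet_Ici, IntegrableOn,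
    ← restrict_Ioi_eq_restrict_Ici]
  exact integrableOn_exp_mul_complex_Ioi hz 0

theorem integral_oneSidedExp {z : ℂ} (hz : z.re < 0) : ∫ u, oneSidedExp z u = -z⁻¹ := by
  rw [oneSidedExp, integral_indicator measurableSet_Ici, ← restrict_Ioi_eq_restrict_Ici,
    integral_exp_mul_complex_Ioi hz 0]
  simp [div_eq_mul_inv]

theorem integrable_prod_oneSidedExp {ι : Type*} [Fintype ι] {z : ι → ℂ}
    (hz : ∀ k, (z k).re < 0) :
    Integrable fun s : ι → ℝ => ∏ k, oneSidedExp (z k) (s k) :=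
  Integrable.fintype_prod fun k => integrable_oneSidedExp (hz k)

theorem norm_oneSidedExp_le_one {z : ℂ} (hz : z.re ≤ 0) (u : ℝ) : ‖oneSidedExp z u‖ ≤ 1 := by
  by_cases hu : u ∈ Ici (0 : ℝ)
  · rw [oneSidedExp, indicator_of_mem hu, norm_exp, Real.exp_le_one_iff]
    simpa using mul_nonpos_of_nonpos_of_nonneg hz hu
  · simp [oneSidedExp, indicator_of_notMem hu]

theorem continuousAt_oneSidedExp (z : ℂ) {u : ℝ} (hu : u ≠ 0) :
    ContinuousAt (oneSidedExp z) u := by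
  rcases hu.lt_or_gt with hu | hu
  · exact (continuousAt_const (y := 0)).congr <| (eventually_lt_nhds hu).mono fun v hv =>
      by simp [oneSidedExp, hv.not_ge]
  · exact (by fun_prop : Continuous fun v : ℝ => cexp (z * v)).continuousAt.congr <|
      (eventually_gt_nhds hu).mono fun v hv => by simp [oneSidedExp, hv.le]

theorem oneSidedExp_mul_cexp (z w : ℂ) (u : ℝ) :
    oneSidedExp z u * cexp (w * u) = oneSidedExp (z + w) u := by
  by_cases hu : u ∈ Ici (0 : ℝ)
  · simp only [oneSidedExp, indicator_of_mem hu, ← Complex.exp_add, add_mul]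
  · simp [oneSidedExp, indicator_of_notMem hu]

theorem volume_setOf_sum_eq {ι : Type*} [Fintype ι] [Nonempty ι] (t : ℝ) :
    volume {x : ι → ℝ | ∑ i, x i = t} = 0 := by
  let L : (ι → ℝ) →ᵃ[ℝ] ℝ := (∑ i, LinearMap.proj i : (ι → ℝ) →ₗ[ℝ] ℝ).toAffineMap
  let H : AffineSubspace ℝ (ι → ℝ) := (AffineSubspace.mk' t ⊥).comap L
  have hH : (H : Set (ι → ℝ)) = {x | ∑ i, x i = t} := by
    ext x
    simp [H, L, AffineSubspace.mem_mk', sub_eq_zero]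
  rw [← hH]
  refine Measure.addHaar_affineSubspace _ H fun htop => ?_
  obtain ⟨i⟩ := ‹Nonempty ι›
  have hmem : Pi.single i (t + 1) ∈ (H : Set (ι → ℝ)) := by rw [htop]; trivial
  simp [hH, Finset.sum_pi_single'] at hmem

section Shear

variable {E : Type*} [MeasurableSpace E] {μ : Measure E} {F : E → ℂ} {h : ℝ → ℂ}
  {L : E → ℝ}

theorem integrable_mul_comp_sub (hF : Integrable F μ) (hh : Integrable h) (hh_meas : Measurable h)
    (hL : Measurable L) :
    Integrable (fun p : E × ℝ => F p.1 * h (p.2 - L p.1)) (μ.prod volume) := by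
  refine (integrable_prod_iff ?_).2
    ⟨ae_of_all _ fun x => (hh.comp_sub_right (L x)).const_mul (F x), ?_⟩
  · exact hF.1.comp_fst.mul
      (hh_meas.comp (measurable_snd.sub (hL.comp measurable_fst))).aestronglyMeasurable
  · simp_rw [norm_mul, integral_const_mul, integral_sub_right_eq_self (‖h ·‖)]
    exact hF.norm.mul_const _

theorem integral_integral_mul_comp_sub [SFinite μ] (hF : Integrable F μ) (hh : Integrable h)
    (hh_meas : Measurable h) (hL : Measurable L) :
    ∫ τ, ∫ x, F x * h (τ - L x) ∂μ = (∫ x, F x ∂μ) * ∫ u, h u := by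
  rw [← integral_integral_swap (integrable_mul_comp_sub hF hh hh_meas hL)]
  simp_rw [integral_const_mul, integral_sub_right_eq_self h, integral_mul_const]

end Shear

variable {n : ℕ}

def simplex (n : ℕ) (τ : ℝ) : Set (Fin n → ℝ) := {s | (∀ k, 0 ≤ s k) ∧ ∑ k, s k ≤ τ}

theorem measurableSet_simplex (τ : ℝ) : MeasurableSet (simplex n τ) := by
  simp only [simplex, ofPred_and, ofPred_forall]
  exact (MeasurableSet.iInter fun k =>
    measurableSet_le measurable_const (measurable_pi_apply k)).inter
      (measurableSet_le (by fun_prop) measurable_const)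

def expConvolution (z : Fin (n + 1) → ℂ) (τ : ℝ) : ℂ :=
  ∫ s : Fin n → ℝ,
    (∏ k, oneSidedExp (z k.castSucc) (s k)) * oneSidedExp (z (Fin.last n)) (τ - ∑ k, s k)

theorem expConvolution_eq_setIntegral (z : Fin (n + 1) → ℂ) (τ : ℝ) :
    expConvolution z τ = ∫ s in simplex n τ,
      (∏ k, cexp (z k.castSucc * s k)) * cexp (z (Fin.last n) * ↑(τ - ∑ k, s k)) := by
  rw [expConvolution, ← integral_indicator (measurableSet_simplex τ)]
  congr 1 with s
  by_cases hs : s ∈ simplex n τ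
  · have hlast : τ - ∑ k, s k ∈ Ici 0 := sub_nonneg.2 hs.2
    simp [indicator_of_mem hs, oneSidedExp, indicator_of_mem hlast, hs.1]
  · rw [indicator_of_notMem hs]
    simp only [simplex, mem_ofPred_eq, not_and_or, not_forall, not_le] at hs
    rcases hs with ⟨k, hk⟩ | hs
    · exact mul_eq_zero_of_left (Finset.prod_eq_zero (Finset.mem_univ k)
        (indicator_of_notMem (notMem_Ici.2 hk) _)) _
    · exact mul_eq_zero_of_right _ (indicator_of_notMem (notMem_Ici.2 (sub_neg.2 hs)) _)

theorem cexp_mul_expConvolution (z : Fin (n + 1) → ℂ) (w : ℂ) (τ : ℝ) :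
    cexp (w * τ) * expConvolution z τ = expConvolution (fun k => z k + w) τ := by
  have hsplit : ∀ s : Fin n → ℝ,
      cexp (w * τ) = (∏ k, cexp (w * s k)) * cexp (w * ↑(τ - ∑ k, s k)) := fun s => by
    rw [← Complex.exp_sum, ← Complex.exp_add]
    push_cast
    rw [← Finset.mul_sum]
    ring_nf
  rw [expConvolution, expConvolution, ← integral_const_mul]
  congr 1 with s
  simp_rw [← oneSidedExp_mul_cexp, Finset.prod_mul_distrib, hsplit s]
  ring

theorem integrable_expConvolution {z : Fin (n + 1) → ℂ} (hz : ∀ k, (z k).re < 0) :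
    Integrable (expConvolution z) :=
  (integrable_mul_comp_sub (L := fun s : Fin n → ℝ => ∑ k, s k)
    (integrable_prod_oneSidedExp (z := fun k : Fin n => z k.castSucc) fun k => hz _)
    (integrable_oneSidedExp (hz (Fin.last n))) (measurable_oneSidedExp _)
    (by fun_prop)).integral_prod_right

theorem integral_expConvolution {z : Fin (n + 1) → ℂ} (hz : ∀ k, (z k).re < 0) :
    ∫ τ, expConvolution z τ = ∏ k, -(z k)⁻¹ := by
  unfold expConvolution
  rw [integral_integral_mul_comp_sub (L := fun s => ∑ k, s k)
    (integrable_prod_oneSidedExp (z := fun k : Fin n => z k.castSucc) fun k => hz _)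
    (integrable_oneSidedExp (hz _)) (measurable_oneSidedExp _) (by fun_prop),
    integral_fintype_prod_volume_eq_prod, Fin.prod_univ_castSucc]
  simp only [integral_oneSidedExp (hz _)]

theorem fourier_expConvolution {z : Fin (n + 1) → ℂ} (hz : ∀ k, (z k).re < 0) (ξ : ℝ) :
    𝓕 (expConvolution z) ξ = ∏ k, -(z k + I * ↑(-2 * π * ξ))⁻¹ := by
  have hshift : ∀ v : ℝ, cexp (↑(-2 * π * v * ξ) * I) • expConvolution z v
      = expConvolution (fun k => z k + I * ↑(-2 * π * ξ)) v := fun v => by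
    rw [smul_eq_mul, ← cexp_mul_expConvolution]
    push_cast
    ring_nf
  simp_rw [Real.fourier_real_eq_integral_exp_smul, hshift]
  exact integral_expConvolution fun k => by simpa using hz k

theorem continuousAt_expConvolution (hn : 1 ≤ n) {z : Fin (n + 1) → ℂ} (hz : ∀ k, (z k).re < 0)
    (t : ℝ) : ContinuousAt (expConvolution z) t := by
  have : Nonempty (Fin n) := Fin.pos_iff_nonempty.1 hn
  have hprod := integrable_prod_oneSidedExp (z := fun k : Fin n => z k.castSucc) fun k => hz _
  unfold expConvolution
  apply continuousAt_of_dominated (bound := fun s => ‖∏ k, oneSidedExp (z k.castSucc) (s k)‖)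
  · have hsum : Measurable fun s : Fin n → ℝ => ∑ k, s k := by fun_prop
    exact .of_forall fun τ => hprod.1.mul
      ((measurable_oneSidedExp _).comp (measurable_const.sub hsum)).aestronglyMeasurable
  · refine .of_forall fun τ => ae_of_all _ fun s => ?_
    rw [norm_mul]
    exact mul_le_of_le_one_right (norm_nonneg _) (norm_oneSidedExp_le_one (hz _).le _)
  · exact hprod.norm
  · filter_upwards [measure_eq_zero_iff_ae_notMem.1 (volume_setOf_sum_eq (ι := Fin n) t)] with s hs
    exact continuousAt_const.mul <| ContinuousAt.comp (g := oneSidedExp (z (Fin.last n)))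
      (continuousAt_oneSidedExp _ (sub_ne_zero.2 (Ne.symm hs)))
      (continuousAt_id.sub continuousAt_const)

theorem expConvolution_neg_I_mul (e : Fin (n + 1) → ℝ) (t : ℝ) :
    expConvolution (fun k => -(I * e k)) t = ∫ s in simplex n t,
      cexp (-(I * ((∑ k : Fin n, s k * e k.castSucc : ℝ) : ℂ))) *
      cexp (-(I * (((t - ∑ k : Fin n, s k) * e (Fin.last n) : ℝ) : ℂ))) := by
  rw [expConvolution_eq_setIntegral]
  congr 1 with s
  rw [← Complex.exp_sum]
  congr 2
  · push_cast
    rw [Finset.mul_sum, ← Finset.sum_neg_distrib]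
    exact Finset.sum_congr rfl fun k _ => by ring
  · push_cast
    ring

theorem I_div_eq_neg_inv (a η α : ℝ) :
    I / ((α : ℂ) - a + I * η) = -((-η - I * a) + I * α)⁻¹ := by
  rw [show (α : ℂ) - a + I * η = I * -((-η - I * a) + I * α) by
    linear_combination (-(a : ℂ) + α) * I_sq, div_mul_cancel_left₀ I_ne_zero, inv_neg]

theorem norm_I_div_sq (a η α : ℝ) :
    ‖I / ((α : ℂ) - a + I * η)‖ ^ 2 = ((α - a) ^ 2 + η ^ 2)⁻¹ := by
  rw [norm_div, norm_I, one_div, inv_pow, Complex.sq_norm, normSq_apply]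
  simp
  ring

theorem norm_I_div_le (a : ℝ) {η : ℝ} (hη : η ≠ 0) (α : ℝ) :
    ‖I / ((α : ℂ) - a + I * η)‖ ≤ |η|⁻¹ := by
  have him : |η| ≤ ‖(α : ℂ) - a + I * η‖ := by
    simpa using abs_im_le_norm ((α : ℂ) - a + I * η)
  rw [norm_div, norm_I, one_div]
  exact inv_anti₀ (abs_pos.2 hη) him

theorem integrable_inv_sq_add_sq (a : ℝ) {η : ℝ} (hη : η ≠ 0) :
    Integrable fun α : ℝ => ((α - a) ^ 2 + η ^ 2)⁻¹ := by
  have h := ((integrable_comp_mul_right_iff (fun x : ℝ => (1 + x ^ 2)⁻¹) (inv_ne_zero hη)).2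
    integrable_inv_one_add_sq).comp_sub_right a |>.const_mul (η ^ 2)⁻¹
  refine h.congr (.of_forall fun α => ?_)
  field_simp
  ring

theorem memLp_two_I_div (a : ℝ) {η : ℝ} (hη : η ≠ 0) :
    MemLp (fun α : ℝ => I / ((α : ℂ) - a + I * η)) 2 := by
  have hmeas : Measurable fun α : ℝ => I / ((α : ℂ) - a + I * η) :=
    measurable_const.div (by fun_prop)
  refine (memLp_two_iff_integrable_sq_norm hmeas.aestronglyMeasurable).2 ?_
  simpa only [norm_I_div_sq] using integrable_inv_sq_add_sq a hη

theorem integrable_prod_of_memLp_two {m : ℕ} {f : Fin (m + 2) → ℝ → ℂ} {C : ℝ}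
    (hf : ∀ k, MemLp (f k) 2) (hC : ∀ k α, ‖f k α‖ ≤ C) :
    Integrable fun α => ∏ k, f k α := by
  simp_rw [Fin.prod_univ_succ (n := m + 1), Fin.prod_univ_succ (n := m), ← mul_assoc]
  refine ((hf 0).integrable_mul (hf 1)).mul_bdd (c := C ^ m)
    (Finset.aestronglyMeasurable_fun_prod _ fun k _ => (hf _).1) (ae_of_all _ fun α => ?_)
  rw [norm_prod]
  calc ∏ k : Fin m, ‖f k.succ.succ α‖ ≤ ∏ _k : Fin m, C :=
        Finset.prod_le_prod (fun k _ => norm_nonneg _) fun k _ => hC _ α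
    _ = C ^ m := by simp

theorem integrable_prod_I_div (hn : 1 ≤ n) {η : ℝ} (hη : η ≠ 0) (e : Fin (n + 1) → ℝ) :
    Integrable fun α : ℝ => ∏ k, I / ((α : ℂ) - e k + I * η) := by
  obtain ⟨m, rfl⟩ := Nat.exists_eq_add_of_le' hn
  exact integrable_prod_of_memLp_two (fun k => memLp_two_I_div _ hη) fun k => norm_I_div_le _ hη

/-- Fourier inversion in the angular frequency `α = -2πξ`. -/
theorem integral_cexp_mul_eq_two_pi_mul_of_fourier_eq {F G : ℝ → ℂ} (hF : Integrable F)
    (hG : Integrable G) (hFG : ∀ ξ, 𝓕 F ξ = G (-2 * π * ξ)) {t : ℝ} (ht : ContinuousAt F t) :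
    ∫ α : ℝ, cexp (-(I * α * t)) * G α = 2 * π * F t := by
  have h2π : (-2 * π : ℝ) ≠ 0 := by positivity
  have hFint : Integrable (𝓕 F) := by
    rw [funext hFG]
    exact (integrable_comp_mul_left_iff G h2π).2 hG
  have hinv := hF.fourierInv_fourier_eq hFint ht
  rw [Real.fourierInv_eq_fourier_neg, Real.fourier_real_eq_integral_exp_smul] at hinv
  have hcov := Measure.integral_comp_mul_left (fun α : ℝ => cexp (-(I * α * t)) * G α) (-2 * π)
  simp_rw [hFG, smul_eq_mul] at hinv
  have hsubst : ∫ x : ℝ, cexp (-(I * ↑(-2 * π * x) * t)) * G (-2 * π * x) = F t := by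
    rw [← hinv]
    congr 1 with x
    push_cast
    ring_nf
  rw [hsubst, abs_inv, abs_of_neg (by linarith [Real.pi_pos]), Complex.real_smul] at hcov
  rw [hcov]
  generalize ∫ α : ℝ, cexp (-(I * α * t)) * G α = J
  push_cast
  field_simp

theorem resolvent_identity_general (n : ℕ) (hn : 1 ≤ n) (e : Fin (n+1) → ℝ) (η t : ℝ)
    (hη : 0 < η) :
    Integrable (fun α : ℝ =>
      Complex.exp (-(Complex.I * (α : ℂ) * (t : ℂ))) *
        ∏ k : Fin (n+1), Complex.I / ((α : ℂ) - (e k : ℂ) + Complex.I * (η : ℂ))) ∧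
    (∫ s in {s : Fin n → ℝ | (∀ k, 0 ≤ s k) ∧ ∑ k, s k ≤ t},
        Complex.exp (-(Complex.I * ((∑ k : Fin n, s k * e k.castSucc : ℝ) : ℂ))) *
        Complex.exp (-(Complex.I * (((t - ∑ k : Fin n, s k) * e (Fin.last n) : ℝ) : ℂ))))
      = ((Real.exp (η * t) / (2 * Real.pi) : ℝ) : ℂ) *
        ∫ α : ℝ, Complex.exp (-(Complex.I * (α : ℂ) * (t : ℂ))) *
          ∏ k : Fin (n+1), Complex.I / ((α : ℂ) - (e k : ℂ) + Complex.I * (η : ℂ)) := by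
  set G : ℝ → ℂ := fun α => ∏ k, I / ((α : ℂ) - e k + I * η)
  set z : Fin (n + 1) → ℂ := fun k => -η - I * e k
  have hz : ∀ k, (z k).re < 0 := fun k => by simpa [z] using hη
  have hG : Integrable G := integrable_prod_I_div hn hη.ne' e
  have hFG : ∀ ξ, 𝓕 (expConvolution z) ξ = G (-2 * π * ξ) := fun ξ => by
    simp only [fourier_expConvolution hz, G, I_div_eq_neg_inv, z]
  have hinv := integral_cexp_mul_eq_two_pi_mul_of_fourier_eq (integrable_expConvolution hz) hG hFG
    (continuousAt_expConvolution hn hz t)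
  have hLHS : cexp (η * t) * expConvolution z t = ∫ s in simplex n t,
      cexp (-(I * ((∑ k : Fin n, s k * e k.castSucc : ℝ) : ℂ))) *
      cexp (-(I * (((t - ∑ k : Fin n, s k) * e (Fin.last n) : ℝ) : ℂ))) := by
    rw [cexp_mul_expConvolution, ← expConvolution_neg_I_mul]
    congr with k
    ring
  refine ⟨hG.bdd_mul (c := 1) (by fun_prop) (ae_of_all _ fun α => ?_), ?_⟩
  · rw [norm_exp]
    simp
  · rw [show {s : Fin n → ℝ | (∀ k, 0 ≤ s k) ∧ ∑ k, s k ≤ t} = simplex n t from rfl, ← hLHS, hinv]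
    push_cast
    field_simp

/-- The resolvent identity (Lemma 4.3), with the delta function on the simplex
parametrized by the first `m - 1 = n` coordinates; here `m = n + 1 ≥ 2`. -/
theorem resolvent_identity (n : ℕ) (hn : 1 ≤ n) (e : Fin (n+1) → ℝ) (η t : ℝ)
    (hη : 0 < η) (ht : 0 < t) :
    Integrable (fun α : ℝ =>
      Complex.exp (-(Complex.I * (α : ℂ) * (t : ℂ))) *
        ∏ k : Fin (n+1), Complex.I / ((α : ℂ) - (e k : ℂ) + Complex.I * (η : ℂ))) ∧
    (∫ s in {s : Fin n → ℝ | (∀ k, 0 ≤ s k) ∧ ∑ k, s k ≤ t},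
        Complex.exp (-(Complex.I * ((∑ k : Fin n, s k * e k.castSucc : ℝ) : ℂ))) *
        Complex.exp (-(Complex.I * (((t - ∑ k : Fin n, s k) * e (Fin.last n) : ℝ) : ℂ))))
      = ((Real.exp (η * t) / (2 * Real.pi) : ℝ) : ℂ) *
        ∫ α : ℝ, Complex.exp (-(Complex.I * (α : ℂ) * (t : ℂ))) *
          ∏ k : Fin (n+1), Complex.I / ((α : ℂ) - (e k : ℂ) + Complex.I * (η : ℂ)) :=
  resolvent_identity_general n hn e η t hη

end KWE
end
end
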